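/- Let A and B be C*-algebras and E a C*-correspondence from A to B, viewed also as a nondegenerate Banach A-B-bimodule. Then for every multiplier (R,L) ∈ M(E) one has ⟨L(b), a·ξ⟩ = b*·⟨R(a*), ξ⟩ for all a ∈ A, b ∈ B and ξ ∈ E. Consequently R is uniquely determined by L, ‖R‖ ≤ ‖L‖, and the projection M(E) → B(B,E), (R,L) ↦ L, is an injective linear isometry, i.e. ‖(R,L)‖ = ‖L‖ for every multiplier (R,L) of E. -/

import Mathlib

/-!
STATEMENT 12: For a C*-correspondence `E` from `A` to `B`, every multiplier `(R,L)` of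
the underlying Banach `A`-`B`-bimodule satisfies `⟨L(b), a·ξ⟩ = b* ⟨R(a*), ξ⟩`; hence
`R` is determined by `L`, `‖R‖ ≤ ‖L‖`, and the projection `(R,L) ↦ L` is an injective
linear isometry (`‖(R,L)‖ = max(‖R‖,‖L‖) = ‖L‖`).

The correspondence structure is encoded by continuous bilinear actions
`lE : A →L[ℂ] E →L[ℂ] E` (`lE a ξ = a·ξ`), `rE : B →L[ℂ] E →L[ℂ] E` (`rE b ξ = ξ·b`)
and a `B`-valued inner product `ip`.  Positivity of `⟨ξ,ξ⟩` is encoded via the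
C*-characterisation `⟨ξ,ξ⟩ = star c * c`.  A multiplier is a pair `(R,L)` of bounded
linear maps with `a·L(b) = R(a)·b`, an element of `(A →L[ℂ] E) × (B →L[ℂ] E)` whose
(product) norm is `max (‖R‖, ‖L‖)`.
-/

namespace Stmt12

universe u v w

variable {A : Type u} {B : Type v} {E : Type w}
variable [NonUnitalCStarAlgebra A] [NonUnitalCStarAlgebra B]
variable [NormedAddCommGroup E] [NormedSpace ℂ E] [CompleteSpace E]
variable (lE : A →L[ℂ] E →L[ℂ] E) (rE : B →L[ℂ] E →L[ℂ] E) (ip : E → E → B)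

/-- `(lE, rE, ip)` makes `E` a C*-correspondence from `A` to `B`. -/
structure IsCStarCorrespondence : Prop where
  ip_add_right : ∀ ξ ζ η, ip ξ (ζ + η) = ip ξ ζ + ip ξ η
  ip_smul_right : ∀ (c : ℂ) ξ ζ, ip ξ (c • ζ) = c • ip ξ ζ
  ip_rsmul_right : ∀ ξ ζ b, ip ξ (rE b ζ) = ip ξ ζ * b
  ip_star : ∀ ξ ζ, star (ip ξ ζ) = ip ζ ξ
  ip_nonneg : ∀ ξ, ∃ c, ip ξ ξ = star c * c
  ip_definite : ∀ ξ, ip ξ ξ = 0 → ξ = 0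
  norm_eq : ∀ ξ, ‖ξ‖ = Real.sqrt ‖ip ξ ξ‖
  rsmul_mul : ∀ b b' ξ, rE (b * b') ξ = rE b' (rE b ξ)
  lsmul_mul : ∀ a a' ξ, lE (a * a') ξ = lE a (lE a' ξ)
  ip_lsmul : ∀ a ξ ζ, ip (lE a ξ) ζ = ip ξ (lE (star a) ζ)
  smul_comm : ∀ a b ξ, rE b (lE a ξ) = lE a (rE b ξ)
  nondegenerate : closure (↑(Submodule.span ℂ {y : E | ∃ a ξ, lE a ξ = y}) : Set E) = Set.univ

/-- A multiplier of `E`: a pair `(R, L)` with `a·L(b) = R(a)·b`. -/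
def IsMultiplier (p : (A →L[ℂ] E) × (B →L[ℂ] E)) : Prop :=
  ∀ a b, lE a (p.2 b) = rE b (p.1 a)

/-!
The identity is the adjointness `⟨a·ξ, ζ⟩ = ⟨ξ, a*·ζ⟩` combined with `a*·L(b) = R(a*)·b`.
Everything else rests on the right translates `R(a)·b = a·L(b)`, which are fixed by `L`.
A vector is determined by its right translates: if `ξ·b = 0` for all `b`, then `z = ⟨ζ, ξ⟩`
satisfies `z z* = 0`. They also control its norm: by Cauchy–Schwarz,
`‖ξ‖⁴ = ‖⟨ξ, ξ·⟨ξ, ξ⟩⟩‖ ≤ ‖ξ‖ ‖ξ·⟨ξ, ξ⟩‖`, so `‖ξ‖ ≤ K` as soon as `‖ξ·b‖ ≤ K ‖b‖` for all `b`.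
For `ξ = R(a)` this applies with `K = ‖a‖ ‖L‖` because the left action is contractive, which in
turn follows from `‖s·ζ‖² ≤ ‖ζ‖ ‖s²·ζ‖` for selfadjoint `s`, iterated along `s, s², s⁴, …`
against the crude bound `‖s^(2ⁿ)·ζ‖ ≤ ‖lE‖ ‖s‖^(2ⁿ) ‖ζ‖`.
-/

theorem le_of_forall_pow_two_pow_le_mul_pow {x y C : ℝ} (hy : 0 ≤ y)
    (h : ∀ n : ℕ, x ^ 2 ^ n ≤ C * y ^ 2 ^ n) : x ≤ y := by
  by_contra! hyx
  rcases hy.eq_or_lt with rfl | hy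
  · have h0 := h 0
    simp only [pow_zero, pow_one, mul_zero] at h0
    exact h0.not_gt hyx
  · have hr : 1 < x / y := (one_lt_div hy).mpr hyx
    obtain ⟨n, hn⟩ := pow_unbounded_of_one_lt C hr
    have : (x / y) ^ 2 ^ n ≤ C := by
      rw [div_pow, div_le_iff₀ (by positivity)]
      exact h n
    exact (hn.trans_le (pow_le_pow_right₀ hr.le Nat.lt_two_pow_self.le)).not_ge this

namespace IsCStarCorrespondence

omit [CompleteSpace E]

variable {lE rE ip} (hE : IsCStarCorrespondence lE rE ip)
include hE

theorem ip_zero_right (ξ : E) : ip ξ 0 = 0 := by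
  simpa using hE.ip_smul_right 0 ξ 0

theorem ip_zero_left (ξ : E) : ip 0 ξ = 0 := by
  rw [← hE.ip_star, hE.ip_zero_right, star_zero]

theorem ip_smul_left (c : ℂ) (ξ η : E) : ip (c • ξ) η = star c • ip ξ η := by
  rw [← hE.ip_star, hE.ip_smul_right, star_smul, hE.ip_star]

theorem ip_rsmul_left (b : B) (ξ η : E) : ip (rE b ξ) η = star b * ip ξ η := by
  rw [← hE.ip_star, hE.ip_rsmul_right, star_mul, hE.ip_star]

theorem ip_sub_right (ξ ζ η : E) : ip ξ (ζ - η) = ip ξ ζ - ip ξ η := by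
  rw [sub_eq_add_neg, ← neg_one_smul ℂ η, hE.ip_add_right, hE.ip_smul_right, neg_one_smul,
    ← sub_eq_add_neg]

theorem ip_sub_left (ξ ζ η : E) : ip (ξ - ζ) η = ip ξ η - ip ζ η := by
  rw [← hE.ip_star, hE.ip_sub_right, star_sub, hE.ip_star, hE.ip_star]

theorem isSelfAdjoint_ip_self (ξ : E) : IsSelfAdjoint (ip ξ ξ) :=
  hE.ip_star ξ ξ

theorem ip_self_nonneg [PartialOrder B] [StarOrderedRing B] (ξ : E) : 0 ≤ ip ξ ξ := by
  obtain ⟨c, hc⟩ := hE.ip_nonneg ξ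
  exact hc ▸ star_mul_self_nonneg c

theorem norm_sq_eq (ξ : E) : ‖ξ‖ ^ 2 = ‖ip ξ ξ‖ := by
  rw [hE.norm_eq, Real.sq_sqrt (norm_nonneg _)]

theorem ip_mul_ip_swap_le [PartialOrder B] [StarOrderedRing B] (ξ η : E) :
    ip η ξ * ip ξ η ≤ ‖ξ‖ ^ 2 • ip η η := by
  rcases eq_or_ne ξ 0 with rfl | hξ
  · simp [hE.ip_zero_left, hE.ip_zero_right]
  set t := ‖ξ‖ ^ 2
  have ht : 0 < t := by have := norm_pos_iff.mpr hξ; positivity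
  have hconj : ip η ξ * ip ξ ξ * ip ξ η ≤ t • (ip η ξ * ip ξ η) := by
    simpa only [t, hE.norm_sq_eq, hE.ip_star] using
      CStarAlgebra.star_left_conjugate_le_norm_smul (a := ip ξ η) (hE.isSelfAdjoint_ip_self ξ)
  have hexpand : ip (rE (ip ξ η) ξ - (t : ℂ) • η) (rE (ip ξ η) ξ - (t : ℂ) • η)
      = ip η ξ * ip ξ ξ * ip ξ η - t • (ip η ξ * ip ξ η) - t • (ip η ξ * ip ξ η)
        + t • t • ip η η := by
    simp only [hE.ip_sub_left, hE.ip_sub_right, hE.ip_rsmul_left, hE.ip_rsmul_right,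
      hE.ip_smul_left, hE.ip_smul_right, Complex.star_def, Complex.conj_ofReal, hE.ip_star]
    simp only [Complex.coe_smul, mul_smul_comm, smul_mul_assoc, mul_assoc]
    abel
  have hnonneg := hE.ip_self_nonneg (rE (ip ξ η) ξ - (t : ℂ) • η)
  rw [hexpand] at hnonneg
  have hscaled : (0 : B) ≤ t • t • ip η η - t • (ip η ξ * ip ξ η) :=
    calc (0 : B) ≤ _ := hnonneg
      _ ≤ t • (ip η ξ * ip ξ η) - t • (ip η ξ * ip ξ η) - t • (ip η ξ * ip ξ η)
          + t • t • ip η η := by gcongr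
      _ = t • t • ip η η - t • (ip η ξ * ip ξ η) := by abel
  exact (smul_le_smul_iff_of_pos_left ht).mp (sub_nonneg.mp hscaled)

theorem norm_ip_le (ξ η : E) : ‖ip ξ η‖ ≤ ‖ξ‖ * ‖η‖ := by
  let _ := CStarAlgebra.spectralOrder B
  have _ := CStarAlgebra.spectralOrderedRing B
  have hsq : ‖ip ξ η‖ ^ 2 ≤ (‖ξ‖ * ‖η‖) ^ 2 :=
    calc ‖ip ξ η‖ ^ 2 = ‖ip η ξ * ip ξ η‖ := by
          rw [← hE.ip_star ξ η, CStarRing.norm_star_mul_self, sq]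
      _ ≤ ‖‖ξ‖ ^ 2 • ip η η‖ := by
          refine CStarAlgebra.norm_le_norm_of_nonneg_of_le ?_ (hE.ip_mul_ip_swap_le ξ η)
          rw [← hE.ip_star ξ η]
          exact star_mul_self_nonneg _
      _ = (‖ξ‖ * ‖η‖) ^ 2 := by
          rw [norm_smul, Real.norm_of_nonneg (by positivity), ← hE.norm_sq_eq, mul_pow]
  exact (pow_le_pow_iff_left₀ (norm_nonneg _) (by positivity) two_ne_zero).mp hsq

theorem norm_lsmul_sq_le (a : A) (ζ : E) : ‖lE a ζ‖ ^ 2 ≤ ‖ζ‖ * ‖lE (star a * a) ζ‖ := by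
  rw [hE.norm_sq_eq, hE.ip_lsmul, ← hE.lsmul_mul]
  exact hE.norm_ip_le _ _

theorem norm_lsmul_le_of_isSelfAdjoint {s : A} (hs : IsSelfAdjoint s) (ζ : E) :
    ‖lE s ζ‖ ≤ ‖s‖ * ‖ζ‖ := by
  rcases eq_or_ne ζ 0 with rfl | hζ
  · simp
  have hζpos : 0 < ‖ζ‖ := norm_pos_iff.mpr hζ
  have hsq : ∀ s : A, IsSelfAdjoint s → (‖lE s ζ‖ / ‖ζ‖) ^ 2 ≤ ‖lE (s * s) ζ‖ / ‖ζ‖ := by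
    intro s hs
    have := hE.norm_lsmul_sq_le s ζ
    rw [hs.star_eq] at this
    rw [div_pow, div_le_div_iff₀ (by positivity) hζpos]
    nlinarith
  have hpow : ∀ n : ℕ, ∀ s : A, IsSelfAdjoint s →
      (‖lE s ζ‖ / ‖ζ‖) ^ 2 ^ n ≤ ‖lE‖ * ‖s‖ ^ 2 ^ n := by
    intro n
    induction n with
    | zero =>
      intro s _
      rw [pow_zero, pow_one, pow_one, div_le_iff₀ hζpos]
      exact (lE s).le_of_opNorm_le (lE.le_opNorm s) ζ
    | succ n ih =>
      intro s hs
      calc (‖lE s ζ‖ / ‖ζ‖) ^ 2 ^ (n + 1) = ((‖lE s ζ‖ / ‖ζ‖) ^ 2) ^ 2 ^ n := by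
            rw [pow_succ', pow_mul]
        _ ≤ (‖lE (s * s) ζ‖ / ‖ζ‖) ^ 2 ^ n := pow_le_pow_left₀ (by positivity) (hsq s hs) _
        _ ≤ ‖lE‖ * ‖s * s‖ ^ 2 ^ n := ih _ (by simpa only [hs.star_eq] using IsSelfAdjoint.star_mul_self s)
        _ = ‖lE‖ * ‖s‖ ^ 2 ^ (n + 1) := by rw [hs.norm_mul_self, ← pow_mul, ← pow_succ']
  have := le_of_forall_pow_two_pow_le_mul_pow (norm_nonneg s) fun n => hpow n s hs
  rwa [div_le_iff₀ hζpos] at this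

theorem norm_lsmul_le (a : A) (ζ : E) : ‖lE a ζ‖ ≤ ‖a‖ * ‖ζ‖ := by
  have hsq : ‖lE a ζ‖ ^ 2 ≤ (‖a‖ * ‖ζ‖) ^ 2 :=
    calc ‖lE a ζ‖ ^ 2 ≤ ‖ζ‖ * ‖lE (star a * a) ζ‖ := hE.norm_lsmul_sq_le a ζ
      _ ≤ ‖ζ‖ * (‖star a * a‖ * ‖ζ‖) := by
          gcongr
          exact hE.norm_lsmul_le_of_isSelfAdjoint (.star_mul_self a) ζ
      _ = (‖a‖ * ‖ζ‖) ^ 2 := by rw [CStarRing.norm_star_mul_self]; ring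
  exact (pow_le_pow_iff_left₀ (norm_nonneg _) (by positivity) two_ne_zero).mp hsq

theorem norm_le_of_forall_norm_rsmul_le {ξ : E} {K : ℝ} (hK : 0 ≤ K)
    (h : ∀ b, ‖rE b ξ‖ ≤ K * ‖b‖) : ‖ξ‖ ≤ K := by
  rcases eq_or_ne ξ 0 with rfl | hξ
  · simpa using hK
  have hξpos : 0 < ‖ξ‖ ^ 3 := by have := norm_pos_iff.mpr hξ; positivity
  refine le_of_mul_le_mul_right ?_ hξpos
  calc ‖ξ‖ * ‖ξ‖ ^ 3 = ‖ip ξ ξ‖ ^ 2 := by rw [← hE.norm_sq_eq]; ring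
    _ = ‖ip ξ (rE (ip ξ ξ) ξ)‖ := by
        rw [hE.ip_rsmul_right, (hE.isSelfAdjoint_ip_self ξ).norm_mul_self]
    _ ≤ ‖ξ‖ * ‖rE (ip ξ ξ) ξ‖ := hE.norm_ip_le _ _
    _ ≤ ‖ξ‖ * (K * ‖ip ξ ξ‖) := by gcongr; exact h _
    _ = K * ‖ξ‖ ^ 3 := by rw [← hE.norm_sq_eq]; ring

theorem eq_of_forall_rsmul_eq {ξ η : E} (h : ∀ b, rE b ξ = rE b η) : ξ = η := by
  have hip : ∀ ζ, ip ζ (ξ - η) = 0 := fun ζ => by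
    rw [← CStarRing.mul_star_self_eq_zero_iff, ← hE.ip_rsmul_right, map_sub, h, sub_self,
      hE.ip_zero_right]
  exact sub_eq_zero.mp (hE.ip_definite _ (hip _))

end IsCStarCorrespondence

namespace IsMultiplier

omit [CompleteSpace E]

variable {lE rE ip} (hE : IsCStarCorrespondence lE rE ip)
include hE

theorem ip_snd_apply_lsmul {m : (A →L[ℂ] E) × (B →L[ℂ] E)} (hm : IsMultiplier lE rE m)
    (a : A) (b : B) (ξ : E) : ip (m.2 b) (lE a ξ) = star b * ip (m.1 (star a)) ξ :=
  calc ip (m.2 b) (lE a ξ) = star (ip (lE a ξ) (m.2 b)) := (hE.ip_star _ _).symm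
    _ = star (ip ξ (rE b (m.1 (star a)))) := by rw [hE.ip_lsmul, hm (star a) b]
    _ = star b * ip (m.1 (star a)) ξ := by rw [hE.ip_rsmul_right, star_mul, hE.ip_star]

theorem fst_eq_of_snd_eq {m m' : (A →L[ℂ] E) × (B →L[ℂ] E)} (hm : IsMultiplier lE rE m)
    (hm' : IsMultiplier lE rE m') (h : m.2 = m'.2) : m.1 = m'.1 :=
  ContinuousLinearMap.ext fun a => hE.eq_of_forall_rsmul_eq fun b => by
    rw [← hm a b, ← hm' a b, h]

theorem norm_fst_le {m : (A →L[ℂ] E) × (B →L[ℂ] E)} (hm : IsMultiplier lE rE m) :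
    ‖m.1‖ ≤ ‖m.2‖ :=
  m.1.opNorm_le_bound (norm_nonneg _) fun a =>
    hE.norm_le_of_forall_norm_rsmul_le (by positivity) fun b =>
      calc ‖rE b (m.1 a)‖ = ‖lE a (m.2 b)‖ := by rw [hm a b]
        _ ≤ ‖a‖ * (‖m.2‖ * ‖b‖) := (hE.norm_lsmul_le a _).trans (by gcongr; exact m.2.le_opNorm b)
        _ = ‖m.2‖ * ‖a‖ * ‖b‖ := by ring

end IsMultiplier

/-- **Multipliers of a C*-correspondence are determined by their second component, and
the projection `(R,L) ↦ L` is an injective linear isometry.** -/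
theorem multiplier_determined_by_second_component
    (hE : IsCStarCorrespondence lE rE ip) :
    (∀ m : (A →L[ℂ] E) × (B →L[ℂ] E), IsMultiplier lE rE m →
      ∀ (a : A) (b : B) (ξ : E),
        ip (m.2 b) (lE a ξ) = star b * ip (m.1 (star a)) ξ) ∧
    -- `R` is uniquely determined by `L`
    (∀ R R' : A →L[ℂ] E, ∀ L : B →L[ℂ] E,
      IsMultiplier lE rE (R, L) → IsMultiplier lE rE (R', L) → R = R') ∧
    -- `‖R‖ ≤ ‖L‖`
    (∀ m : (A →L[ℂ] E) × (B →L[ℂ] E), IsMultiplier lE rE m → ‖m.1‖ ≤ ‖m.2‖) ∧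
    -- the projection is isometric: `‖(R,L)‖ = ‖L‖`
    (∀ m : (A →L[ℂ] E) × (B →L[ℂ] E), IsMultiplier lE rE m → ‖m‖ = ‖m.2‖) ∧
    -- and injective
    (∀ m m' : (A →L[ℂ] E) × (B →L[ℂ] E), IsMultiplier lE rE m → IsMultiplier lE rE m' →
      m.2 = m'.2 → m = m') :=
  ⟨fun _ hm => hm.ip_snd_apply_lsmul hE,
    fun _ _ _ h h' => h.fst_eq_of_snd_eq hE h' rfl,
    fun _ hm => hm.norm_fst_le hE,
    fun m hm => by rw [Prod.norm_def, max_eq_right (hm.norm_fst_le hE)],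
    fun _ _ hm hm' h => Prod.ext (hm.fst_eq_of_snd_eq hE hm' h) h⟩


end Stmt12
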